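/- Let m, m_t, m_r be positive integers with m_t ≤ m_r and m_t + m_r ≤ m. Then the ergodic capacity C(s) = E[ln det(I_{m_t} + s·HᴴH)] of the MIMO Jacobi fading channel satisfies lim_{s→0⁺} C(s)/s = m_t·m_r/m; that is, in the low-SNR regime the ergodic capacity is asymptotic to (m_t·m_r/m)·s. -/

import Mathlib

open MeasureTheory Matrix

/-- Borel measurable-space structure on the unitary group `U(m)`. -/
noncomputable instance (m : ℕ) : MeasurableSpace (Matrix.unitaryGroup (Fin m) ℂ) := borel _

instance (m : ℕ) : BorelSpace (Matrix.unitaryGroup (Fin m) ℂ) := ⟨rfl⟩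

/-- The MIMO Jacobi fading channel matrix: the upper-left `mr × mt` block of a
unitary `m × m` matrix `U`. -/
noncomputable def jacobiH (m mt mr : ℕ) (hr : mr ≤ m) (ht : mt ≤ m)
    (U : Matrix.unitaryGroup (Fin m) ℂ) : Matrix (Fin mr) (Fin mt) ℂ :=
  (U : Matrix (Fin m) (Fin m) ℂ).submatrix (Fin.castLE hr) (Fin.castLE ht)

/-- The ergodic capacity `E[ln det (I + s · Hᴴ H)]` of the MIMO Jacobi fading channel,
the expectation being taken with respect to the measure `μ` on the unitary group. -/
noncomputable def ergodicCapacity (m mt mr : ℕ) (hr : mr ≤ m) (ht : mt ≤ m) (s : ℝ)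
    (μ : Measure (Matrix.unitaryGroup (Fin m) ℂ)) : ℝ :=
  ∫ U, Real.log ((Matrix.det ((1 : Matrix (Fin mt) (Fin mt) ℂ) +
      (s : ℂ) • ((jacobiH m mt mr hr ht U)ᴴ * jacobiH m mt mr hr ht U))).re) ∂μ

/-!
With `A = HᴴH ⪰ 0`, eigenvalues `λᵢ ≥ 0` and `t = tr A = ∑ λᵢ`, the bounds
`x - x² ≤ log (1 + x) ≤ x` give `s t - s² t² ≤ log det (1 + s A) ≤ s t`. Every entry of a unitary
matrix has modulus at most one, so `t ≤ mt mr`, and `C(s)` is squeezed between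
`s E[t] (1 - s mt mr)` and `s E[t]`. Left invariance of Haar measure under permutation matrices
makes `E |U i j|²` independent of `i`; since the columns of `U` are unit vectors, it equals `1 / m`,
whence `E[t] = mt mr / m`.
-/

open Filter Topology
open scoped ComplexOrder

namespace Real

lemma log_one_add_le_self {x : ℝ} (hx : 0 ≤ x) : log (1 + x) ≤ x := by
  simpa using log_le_sub_one_of_pos (by linarith : 0 < 1 + x)

lemma sub_sq_le_log_one_add {x : ℝ} (hx : 0 ≤ x) : x - x ^ 2 ≤ log (1 + x) := by
  have hpos : 0 < 1 + x := by linarith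
  refine le_trans ?_ (one_sub_inv_le_log_of_pos hpos)
  have h_inv : (1 + x)⁻¹ ≤ 1 - x + x ^ 2 := by
    rw [inv_le_iff_one_le_mul₀ hpos]
    nlinarith [pow_nonneg hx 3]
  linarith

end Real

lemma tendsto_div_nhdsGT_zero_of_squeeze {f : ℝ → ℝ} {a c : ℝ}
    (h_lower : ∀ s, 0 < s → s * a * (1 - s * c) ≤ f s) (h_upper : ∀ s, 0 < s → f s ≤ s * a) :
    Tendsto (fun s => f s / s) (𝓝[>] 0) (𝓝 a) := by
  have h_left : Tendsto (fun s : ℝ => a * (1 - s * c)) (𝓝[>] 0) (𝓝 a) := by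
    have h_cont : Continuous fun s : ℝ => a * (1 - s * c) := by fun_prop
    simpa using (h_cont.tendsto 0).mono_left nhdsWithin_le_nhds
  refine tendsto_of_tendsto_of_tendsto_of_le_of_le' h_left tendsto_const_nhds ?_ ?_ <;>
    filter_upwards [self_mem_nhdsWithin] with s (hs : 0 < s)
  · rw [le_div_iff₀ hs]; linarith [h_lower s hs]
  · rw [div_le_iff₀ hs]; linarith [h_upper s hs]

namespace Matrix

lemma re_trace_conjTranspose_mul_self {l n : Type*} [Fintype l] [Fintype n] (B : Matrix l n ℂ) :
    (Bᴴ * B).trace.re = ∑ i, ∑ j, Complex.normSq (B i j) := by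
  simp only [trace, diag, mul_apply, conjTranspose_apply, Complex.re_sum]
  rw [Finset.sum_comm]
  simp [Complex.normSq_apply]

variable {n : Type*} [Fintype n] [DecidableEq n]

lemma IsHermitian.det_one_add_smul {A : Matrix n n ℂ} (hA : A.IsHermitian) (s : ℝ) :
    (1 + (s : ℂ) • A).det = ∏ i, ((1 + s * hA.eigenvalues i : ℝ) : ℂ) := by
  have h_cfc : 1 + (s : ℂ) • A = cfc (fun x : ℝ => 1 + s * x) A := by
    rw [cfc_add .., cfc_const_one .., cfc_const_mul .., cfc_id' ..]
    simp [Complex.coe_smul]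
  rw [h_cfc, hA.cfc_eq]
  simp [IsHermitian.cfc, -Unitary.conjStarAlgAut_apply]

lemma IsHermitian.re_trace_eq_sum_eigenvalues {A : Matrix n n ℂ} (hA : A.IsHermitian) :
    A.trace.re = ∑ i, hA.eigenvalues i := by
  simp [hA.trace_eq_sum_eigenvalues]

namespace PosSemidef

variable {A : Matrix n n ℂ} {s : ℝ}

lemma log_re_det_one_add_smul (hA : A.PosSemidef) (hs : 0 ≤ s) :
    Real.log (1 + (s : ℂ) • A).det.re = ∑ i, Real.log (1 + s * hA.isHermitian.eigenvalues i) := by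
  rw [hA.isHermitian.det_one_add_smul, ← Complex.ofReal_prod, Complex.ofReal_re, Real.log_prod]
  intro i _
  have := mul_nonneg hs (hA.eigenvalues_nonneg i)
  positivity

lemma log_re_det_one_add_smul_le (hA : A.PosSemidef) (hs : 0 ≤ s) :
    Real.log (1 + (s : ℂ) • A).det.re ≤ s * A.trace.re := by
  rw [hA.log_re_det_one_add_smul hs, hA.isHermitian.re_trace_eq_sum_eigenvalues, Finset.mul_sum]
  exact Finset.sum_le_sum fun i _ =>
    Real.log_one_add_le_self (mul_nonneg hs (hA.eigenvalues_nonneg i))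

lemma sub_le_log_re_det_one_add_smul (hA : A.PosSemidef) (hs : 0 ≤ s) :
    s * A.trace.re - s ^ 2 * A.trace.re ^ 2 ≤ Real.log (1 + (s : ℂ) • A).det.re := by
  set ev := hA.isHermitian.eigenvalues
  have hsev : ∀ i, 0 ≤ s * ev i := fun i => mul_nonneg hs (hA.eigenvalues_nonneg i)
  have h_sq := Finset.sum_sq_le_sq_sum_of_nonneg (s := Finset.univ) fun i _ => hsev i
  rw [hA.log_re_det_one_add_smul hs, hA.isHermitian.re_trace_eq_sum_eigenvalues]
  calc s * ∑ i, ev i - s ^ 2 * (∑ i, ev i) ^ 2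
      = ∑ i, s * ev i - (∑ i, s * ev i) ^ 2 := by rw [← Finset.mul_sum]; ring
    _ ≤ ∑ i, (s * ev i - (s * ev i) ^ 2) := by rw [Finset.sum_sub_distrib]; linarith
    _ ≤ ∑ i, Real.log (1 + s * ev i) :=
      Finset.sum_le_sum fun i _ => Real.sub_sq_le_log_one_add (hsev i)

end PosSemidef

lemma permMatrix_mem_unitaryGroup (σ : Equiv.Perm n) : σ.permMatrix ℂ ∈ unitaryGroup n ℂ := by
  rw [mem_unitaryGroup_iff', star_eq_conjTranspose, conjTranspose_permMatrix, ← permMatrix_mul,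
    mul_inv_cancel, permMatrix_one]

namespace unitaryGroup

lemma sum_normSq_apply (U : unitaryGroup n ℂ) (j : n) :
    ∑ i, Complex.normSq ((U : Matrix n n ℂ) i j) = 1 := by
  have h := congrArg (fun M : Matrix n n ℂ => (M j j).re) (mem_unitaryGroup_iff'.mp U.2)
  simpa [mul_apply, Complex.re_sum, Complex.normSq_apply] using h

lemma normSq_apply_le_one (U : unitaryGroup n ℂ) (i j : n) :
    Complex.normSq ((U : Matrix n n ℂ) i j) ≤ 1 :=
  sum_normSq_apply U j ▸
    Finset.single_le_sum (f := fun i' => Complex.normSq ((U : Matrix n n ℂ) i' j))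
      (fun _ _ => Complex.normSq_nonneg _) (Finset.mem_univ i)

end unitaryGroup

end Matrix

section Haar

variable {m : ℕ} (μ : Measure (unitaryGroup (Fin m) ℂ))

lemma integrable_normSq_apply [IsFiniteMeasure μ] (i j : Fin m) :
    Integrable (fun U : unitaryGroup (Fin m) ℂ =>
      Complex.normSq ((U : Matrix (Fin m) (Fin m) ℂ) i j)) μ := by
  refine Integrable.of_bound ?_ 1 (ae_of_all _ fun U => ?_)
  · exact (Complex.continuous_normSq.comp
      (continuous_subtype_val.matrix_elem i j)).aestronglyMeasurable
  · rw [Real.norm_of_nonneg (Complex.normSq_nonneg _)]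
    exact unitaryGroup.normSq_apply_le_one U i j

lemma integral_normSq_apply_row_eq [μ.IsMulLeftInvariant] (i i' j : Fin m) :
    ∫ U, Complex.normSq ((U : Matrix (Fin m) (Fin m) ℂ) i' j) ∂μ =
      ∫ U, Complex.normSq ((U : Matrix (Fin m) (Fin m) ℂ) i j) ∂μ := by
  let g : unitaryGroup (Fin m) ℂ :=
    ⟨(Equiv.swap i i').permMatrix ℂ, permMatrix_mem_unitaryGroup _⟩
  have h_row : ∀ U : unitaryGroup (Fin m) ℂ,
      ((g * U : unitaryGroup (Fin m) ℂ) : Matrix (Fin m) (Fin m) ℂ) i j =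
        (U : Matrix (Fin m) (Fin m) ℂ) i' j := fun U => by
    change ((Equiv.swap i i').toPEquiv.toMatrix * (U : Matrix (Fin m) (Fin m) ℂ) :
      Matrix (Fin m) (Fin m) ℂ) i j = _
    simp [PEquiv.toMatrix_toPEquiv_mul]
  simp_rw [← h_row]
  exact integral_mul_left_eq_self
    (fun U : unitaryGroup (Fin m) ℂ => Complex.normSq ((U : Matrix (Fin m) (Fin m) ℂ) i j)) g

lemma integral_normSq_apply [μ.IsMulLeftInvariant] [IsProbabilityMeasure μ] (i j : Fin m) :
    ∫ U, Complex.normSq ((U : Matrix (Fin m) (Fin m) ℂ) i j) ∂μ = (m : ℝ)⁻¹ := by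
  refine eq_inv_of_mul_eq_one_right ?_
  calc (m : ℝ) * ∫ U, Complex.normSq ((U : Matrix (Fin m) (Fin m) ℂ) i j) ∂μ
      = ∑ i' : Fin m, ∫ U, Complex.normSq ((U : Matrix (Fin m) (Fin m) ℂ) i' j) ∂μ := by
        simp [integral_normSq_apply_row_eq μ i]
    _ = ∫ U, ∑ i', Complex.normSq ((U : Matrix (Fin m) (Fin m) ℂ) i' j) ∂μ :=
        (integral_finsetSum _ fun i' _ => integrable_normSq_apply μ i' j).symm
    _ = 1 := by simp [unitaryGroup.sum_normSq_apply]

end Haar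

section Jacobi

variable {m mt mr : ℕ} (hr : mr ≤ m) (ht : mt ≤ m)

noncomputable def jacobiGain (U : unitaryGroup (Fin m) ℂ) : ℝ :=
  ((jacobiH m mt mr hr ht U)ᴴ * jacobiH m mt mr hr ht U).trace.re

lemma jacobiGain_eq_sum (U : unitaryGroup (Fin m) ℂ) :
    jacobiGain hr ht U =
      ∑ i, ∑ j,
        Complex.normSq ((U : Matrix (Fin m) (Fin m) ℂ) (Fin.castLE hr i) (Fin.castLE ht j)) :=
  re_trace_conjTranspose_mul_self _

lemma jacobiGain_nonneg (U : unitaryGroup (Fin m) ℂ) : 0 ≤ jacobiGain hr ht U := by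
  rw [jacobiGain_eq_sum]
  exact Finset.sum_nonneg fun i _ => Finset.sum_nonneg fun j _ => Complex.normSq_nonneg _

lemma jacobiGain_le (U : unitaryGroup (Fin m) ℂ) : jacobiGain hr ht U ≤ mt * mr := by
  rw [jacobiGain_eq_sum]
  calc _ ≤ ∑ _i : Fin mr, ∑ _j : Fin mt, (1 : ℝ) :=
        Finset.sum_le_sum fun i _ => Finset.sum_le_sum fun j _ =>
          unitaryGroup.normSq_apply_le_one U _ _
    _ = mt * mr := by simp [mul_comm]

lemma continuous_conjTranspose_mul_jacobiH :
    Continuous fun U => (jacobiH m mt mr hr ht U)ᴴ * jacobiH m mt mr hr ht U :=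
  have h_cont : Continuous (jacobiH m mt mr hr ht) := continuous_subtype_val.matrix_submatrix _ _
  h_cont.matrix_conjTranspose.matrix_mul h_cont

lemma integrable_jacobiGain (μ : Measure (unitaryGroup (Fin m) ℂ)) [IsFiniteMeasure μ] :
    Integrable (jacobiGain hr ht) μ := by
  refine Integrable.of_bound ?_ (mt * mr) (ae_of_all _ fun U => ?_)
  · exact (Complex.continuous_re.comp
      (continuous_conjTranspose_mul_jacobiH hr ht).matrix_trace).aestronglyMeasurable
  · rw [Real.norm_of_nonneg (jacobiGain_nonneg hr ht U)]
    exact jacobiGain_le hr ht U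

lemma integral_jacobiGain (μ : Measure (unitaryGroup (Fin m) ℂ)) [μ.IsMulLeftInvariant]
    [IsProbabilityMeasure μ] : ∫ U, jacobiGain hr ht U ∂μ = mt * mr / m := by
  simp_rw [jacobiGain_eq_sum]
  rw [integral_finsetSum _ fun i _ => integrable_finsetSum _ fun j _ =>
    integrable_normSq_apply μ _ _]
  simp_rw [integral_finsetSum _ fun j _ => integrable_normSq_apply μ _ _, integral_normSq_apply]
  simp only [Finset.sum_const, Finset.card_univ, Fintype.card_fin, nsmul_eq_mul]
  ring

variable {s : ℝ}

lemma mul_sub_le_log_re_det_jacobiH (U : unitaryGroup (Fin m) ℂ) (hs : 0 ≤ s) :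
    s * jacobiGain hr ht U * (1 - s * (mt * mr)) ≤
      Real.log (1 + (s : ℂ) • ((jacobiH m mt mr hr ht U)ᴴ * jacobiH m mt mr hr ht U)).det.re := by
  refine le_trans ?_ ((posSemidef_conjTranspose_mul_self _).sub_le_log_re_det_one_add_smul hs)
  have h_sq : jacobiGain hr ht U ^ 2 ≤ jacobiGain hr ht U * (mt * mr) := by
    rw [sq]
    exact mul_le_mul_of_nonneg_left (jacobiGain_le hr ht U) (jacobiGain_nonneg hr ht U)
  change _ ≤ s * jacobiGain hr ht U - s ^ 2 * jacobiGain hr ht U ^ 2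
  nlinarith [mul_le_mul_of_nonneg_left h_sq (sq_nonneg s)]

lemma log_re_det_jacobiH_le (U : unitaryGroup (Fin m) ℂ) (hs : 0 ≤ s) :
    Real.log (1 + (s : ℂ) • ((jacobiH m mt mr hr ht U)ᴴ * jacobiH m mt mr hr ht U)).det.re ≤
      s * jacobiGain hr ht U :=
  (posSemidef_conjTranspose_mul_self _).log_re_det_one_add_smul_le hs

variable (μ : Measure (unitaryGroup (Fin m) ℂ)) [IsFiniteMeasure μ]

lemma integrable_log_re_det_jacobiH (hs : 0 ≤ s) :
    Integrable (fun U =>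
      Real.log (1 + (s : ℂ) • ((jacobiH m mt mr hr ht U)ᴴ * jacobiH m mt mr hr ht U)).det.re)
      μ := by
  have h_det : Continuous fun U =>
      (1 + (s : ℂ) • ((jacobiH m mt mr hr ht U)ᴴ * jacobiH m mt mr hr ht U)).det.re := by
    have := continuous_conjTranspose_mul_jacobiH hr ht
    fun_prop
  exact integrable_of_le_of_le (Real.measurable_log.comp h_det.measurable).aestronglyMeasurable
    (ae_of_all _ fun U => mul_sub_le_log_re_det_jacobiH hr ht U hs)
    (ae_of_all _ fun U => log_re_det_jacobiH_le hr ht U hs)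
    (((integrable_jacobiGain hr ht μ).const_mul s).mul_const _)
    ((integrable_jacobiGain hr ht μ).const_mul s)

lemma ergodicCapacity_le (hs : 0 ≤ s) :
    ergodicCapacity m mt mr hr ht s μ ≤ s * ∫ U, jacobiGain hr ht U ∂μ := by
  rw [← integral_const_mul]
  exact integral_mono (integrable_log_re_det_jacobiH hr ht μ hs)
    ((integrable_jacobiGain hr ht μ).const_mul s) fun U => log_re_det_jacobiH_le hr ht U hs

lemma mul_sub_le_ergodicCapacity (hs : 0 ≤ s) :
    s * (∫ U, jacobiGain hr ht U ∂μ) * (1 - s * (mt * mr)) ≤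
      ergodicCapacity m mt mr hr ht s μ := by
  rw [← integral_const_mul, ← integral_mul_const]
  exact integral_mono (((integrable_jacobiGain hr ht μ).const_mul s).mul_const _)
    (integrable_log_re_det_jacobiH hr ht μ hs) fun U => mul_sub_le_log_re_det_jacobiH hr ht U hs

end Jacobi

theorem jacobi_ergodic_capacity_low_snr_general
    (m mt mr : ℕ) (h2 : mt + mr ≤ m)
    (μ : Measure (Matrix.unitaryGroup (Fin m) ℂ))
    [μ.IsHaarMeasure] [IsProbabilityMeasure μ] :
    Filter.Tendsto
      (fun s : ℝ => ergodicCapacity m mt mr (le_trans (Nat.le_add_left mr mt) h2)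
          (le_trans (Nat.le_add_right mt mr) h2) s μ / s)
      (nhdsWithin 0 (Set.Ioi 0))
      (nhds ((mt : ℝ) * mr / m)) := by
  have hr : mr ≤ m := le_trans (Nat.le_add_left mr mt) h2
  have ht : mt ≤ m := le_trans (Nat.le_add_right mt mr) h2
  rw [← integral_jacobiGain hr ht μ]
  exact tendsto_div_nhdsGT_zero_of_squeeze
    (fun s hs => mul_sub_le_ergodicCapacity hr ht μ hs.le)
    (fun s hs => ergodicCapacity_le hr ht μ hs.le)

/-- **Low-SNR asymptotics of the ergodic capacity of the MIMO Jacobi fading channel.**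
If `mt ≤ mr` and `mt + mr ≤ m`, then `C(s)/s → mt · mr / m` as `s → 0⁺`, where
`C(s) = E[ln det (I + s · Hᴴ H)]` with expectation over the Haar probability measure
on the unitary group `U(m)`. -/
theorem jacobi_ergodic_capacity_low_snr
    (m mt mr : ℕ) (hm : 0 < m) (hmt : 0 < mt) (hmr : 0 < mr)
    (h1 : mt ≤ mr) (h2 : mt + mr ≤ m)
    (μ : Measure (Matrix.unitaryGroup (Fin m) ℂ))
    [μ.IsHaarMeasure] [IsProbabilityMeasure μ] :
    Filter.Tendsto
      (fun s : ℝ => ergodicCapacity m mt mr (le_trans (Nat.le_add_left mr mt) h2)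
          (le_trans (Nat.le_add_right mt mr) h2) s μ / s)
      (nhdsWithin 0 (Set.Ioi 0))
      (nhds ((mt : ℝ) * mr / m)) :=
  jacobi_ergodic_capacity_low_snr_general m mt mr h2 μ
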